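/- arXiv:1305.1556 — 3 statements merged into one kernel-verified Lean document; each statement's English description precedes it below -/
import Mathlib

section
/- The ℤ-module ℤ(p^∞) (the Prüfer p-group) has no prime submodules, i.e., Spec(ℤ(p^∞)) = ∅, for any prime integer p. -/
open Submodule

variable {R : Type*} [CommRing R] {M : Type*} [AddCommGroup M] [Module R M]

/-- A submodule `N` of `M` is *prime* if `N ≠ M` and whenever `r • m ∈ N`,
either `r ∈ (N :ᵣ M)` or `m ∈ N`. Here `(N :ᵣ M)` is `N.colon ⊤`. -/
def IsPrimeSubmodule (N : Submodule R M) : Prop :=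
  N ≠ ⊤ ∧ ∀ (r : R) (m : M), r • m ∈ N → r ∈ N.colon ⊤ ∨ m ∈ N

/-- The prime spectrum of the module `M`: the set of prime submodules. -/
def MSpec (R M : Type*) [CommRing R] [AddCommGroup M] [Module R M] :=
  {P : Submodule R M // IsPrimeSubmodule P}

/-- `V(N) = {P ∈ Spec(M) | (N : M) ⊆ (P : M)}`. -/
def VV (N : Submodule R M) : Set (MSpec R M) :=
  {P | N.colon ⊤ ≤ P.1.colon ⊤}

/-- The basic open set `X_r = Spec(M) \ V(rM)`. -/
def Xb (r : R) : Set (MSpec R M) :=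
  (VV (Ideal.span {r} • (⊤ : Submodule R M)))ᶜ


/-- The Prüfer `p`-group `ℤ(p^∞)`, realized as the `p`-primary torsion submodule of the
`ℤ`-module `ℚ/ℤ`. -/
def PruferModule (p : ℕ) : Submodule ℤ (ℚ ⧸ Submodule.span ℤ {(1 : ℚ)}) where
  carrier := {x | ∃ n : ℕ, (p : ℤ) ^ n • x = 0}
  add_mem' := by
    rintro a b ⟨n, hn⟩ ⟨m, hm⟩
    refine ⟨n + m, ?_⟩
    have h1 : ((p : ℤ) ^ (n + m)) • a = 0 := by
      rw [pow_add, mul_comm, mul_smul, hn, smul_zero]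
    have h2 : ((p : ℤ) ^ (n + m)) • b = 0 := by
      rw [pow_add, mul_smul, hm, smul_zero]
    rw [smul_add, h1, h2, add_zero]
  zero_mem' := ⟨0, smul_zero _⟩
  smul_mem' := by
    rintro c x ⟨n, hn⟩
    exact ⟨n, by rw [smul_comm, hn, smul_zero]⟩

/-!
If `r` kills every element of `M` after finitely many steps, then a prime submodule `N` not
containing `r • M` must contain everything, by peeling off one factor of `r` at a time;
if instead `r • M ⊆ N` and `M` is `r`-divisible, again `N = M`. The Prüfer group is both
`p`-divisible and `p`-primary torsion.
-/

namespace IsPrimeSubmodule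

variable {N : Submodule R M}

theorem mem_of_pow_smul_mem (hN : IsPrimeSubmodule N) {r : R} (hr : r ∉ N.colon ⊤) {m : M}
    {n : ℕ} (h : r ^ n • m ∈ N) : m ∈ N := by
  induction n generalizing m with
  | zero => simpa using h
  | succ k ih =>
    have hrm : r • m ∈ N := ih (by rwa [smul_smul, ← pow_succ])
    exact (hN.2 r m hrm).resolve_left hr

end IsPrimeSubmodule

theorem Submodule.eq_top_of_mem_colon_of_divisible {N : Submodule R M} {r : R}
    (hdiv : ∀ x : M, ∃ y, r • y = x) (hr : r ∈ N.colon ⊤) : N = ⊤ := by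
  refine eq_top_iff.2 fun x _ => ?_
  obtain ⟨y, rfl⟩ := hdiv x
  exact mem_colon.1 hr y trivial

theorem not_isPrimeSubmodule_of_divisible_of_pow_smul_eq_zero (r : R)
    (hdiv : ∀ x : M, ∃ y, r • y = x) (htors : ∀ x : M, ∃ n : ℕ, r ^ n • x = 0)
    (N : Submodule R M) : ¬ IsPrimeSubmodule N := by
  intro hN
  apply hN.1
  by_cases hr : r ∈ N.colon ⊤
  · exact eq_top_of_mem_colon_of_divisible hdiv hr
  · refine eq_top_iff.2 fun m _ => ?_
    obtain ⟨n, hn⟩ := htors m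
    exact hN.mem_of_pow_smul_mem hr (n := n) (by rw [hn]; exact N.zero_mem)

namespace PruferModule

theorem exists_pow_smul_eq_zero (p : ℕ) (x : PruferModule p) :
    ∃ n : ℕ, (p : ℤ) ^ n • x = 0 := by
  obtain ⟨n, hn⟩ := x.2
  exact ⟨n, Subtype.ext hn⟩

theorem exists_natCast_smul_eq {p : ℕ} (hp : p ≠ 0) (x : PruferModule p) :
    ∃ y : PruferModule p, (p : ℤ) • y = x := by
  obtain ⟨x, n, hn⟩ := x
  obtain ⟨q, rfl⟩ := Submodule.Quotient.mk_surjective _ x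
  have hdiv : (p : ℤ) • (q / p) = q := by
    rw [zsmul_eq_mul, Int.cast_natCast]
    field_simp
  have hy : (p : ℤ) ^ (n + 1) • (Submodule.Quotient.mk (q / p) :
      ℚ ⧸ Submodule.span ℤ {(1 : ℚ)}) = 0 := by
    rw [pow_succ, mul_smul, ← Submodule.Quotient.mk_smul, hdiv, hn]
  exact ⟨⟨Submodule.Quotient.mk (q / p), n + 1, hy⟩,
    Subtype.ext <| by
      rw [Submodule.coe_smul, ← Submodule.Quotient.mk_smul, hdiv]⟩

end PruferModule

/-- The Prüfer group `ℤ(p^∞)` has no prime submodules: `Spec(ℤ(p^∞)) = ∅`. -/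
theorem prufer_primeless (p : ℕ) (hp : p.Prime) :
    ∀ N : Submodule ℤ (PruferModule p), ¬ IsPrimeSubmodule N :=
  not_isPrimeSubmodule_of_divisible_of_pow_smul_eq_zero (p : ℤ)
    (PruferModule.exists_natCast_smul_eq hp.ne_zero) (PruferModule.exists_pow_smul_eq_zero p)
end

section
/- Let M be a faithful primeful R-module and N, K ≤ M submodules with V(N) ⊆ V(K) in Spec(M). Then √(K :_R M) ⊆ √(N :_R M). In particular, if V(N) = V(K) then √(N :_R M) = √(K :_R M). -/
open Submodule

variable {R : Type*} [CommRing R] {M : Type*} [AddCommGroup M] [Module R M]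

/-- `M` is a primeful `R`-module: every prime ideal containing `Ann(M)` is the colon ideal
`(P :ᵣ M)` of some prime submodule `P`. -/
def IsPrimeful (R M : Type*) [CommRing R] [AddCommGroup M] [Module R M] : Prop :=
  ∀ p : Ideal R, p.IsPrime → (⊥ : Submodule R M).colon ⊤ ≤ p →
    ∃ P : Submodule R M, IsPrimeSubmodule P ∧ P.colon ⊤ = p

/-- For a faithful primeful module, `V(N) ⊆ V(K)` implies `√(K : M) ⊆ √(N : M)`;
in particular `V(N) = V(K)` implies `√(N : M) = √(K : M)`. -/
theorem radical_colon_of_vv_subset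
    (hfaith : (⊥ : Submodule R M).colon ⊤ = ⊥) (hpf : IsPrimeful R M)
    (N K : Submodule R M) :
    (VV N ⊆ VV K → (K.colon ⊤).radical ≤ (N.colon ⊤).radical) ∧
    (VV N = VV K → (N.colon ⊤).radical = (K.colon ⊤).radical) := by
  have main : ∀ A B : Submodule R M, VV A ⊆ VV B →
      (B.colon ⊤).radical ≤ (A.colon ⊤).radical := by
    intro A B h
    rw [Ideal.radical_eq_sInf (A.colon ⊤)]
    refine le_sInf ?_
    rintro p ⟨hle, hp⟩
    obtain ⟨P, hP, hPp⟩ := hpf p hp (by rw [hfaith]; exact bot_le)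
    have hmem : (⟨P, hP⟩ : MSpec R M) ∈ VV A := by
      show A.colon ⊤ ≤ P.colon ⊤
      rw [hPp]; exact hle
    have hB := h hmem
    simp only [VV, Set.mem_setOf_eq, hPp] at hB
    exact hp.radical_le_iff.mpr (by have h' : B.colon ⊤ ≤ P.colon ⊤ := hB; rwa [hPp] at h')
  exact ⟨main N K, fun heq => le_antisymm (main K N heq.ge) (main N K heq.le)⟩
end

section
/- Let M be a faithful primeful R-module, f ∈ R, and suppose the basic open set X_f = Spec(M) \ V(fM) is covered by finitely many basic opens X_{k₁}, …, X_{k_n}. Then f ∈ √(k₁, …, k_n), i.e., some power of f lies in the ideal generated by k₁, …, k_n. -/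
open Submodule

variable {R : Type*} [CommRing R] {M : Type*} [AddCommGroup M] [Module R M]

/-- If `M` is faithful primeful and `X_f ⊆ X_{k₁} ∪ ⋯ ∪ X_{kₙ}`, then
`f ∈ √(k₁, …, kₙ)`. -/
theorem mem_radical_of_xb_subset
    (hfaith : (⊥ : Submodule R M).colon ⊤ = ⊥) (hpf : IsPrimeful R M)
    (f : R) (n : ℕ) (k : Fin n → R)
    (hcov : Xb (M := M) f ⊆ ⋃ i, Xb (M := M) (k i)) :
    f ∈ (Ideal.span (Set.range k)).radical := by

  rw [Ideal.radical_eq_sInf, Submodule.mem_sInf]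
  by_contra h
  push_neg at h
  obtain ⟨p, ⟨hle, hp⟩, hfp⟩ := h
  obtain ⟨P, hP, hPc⟩ := hpf p hp (by rw [hfaith]; exact bot_le)
  have hmem : (⟨P, hP⟩ : MSpec R M) ∈ Xb (M := M) f := by
    intro hcon
    apply hfp
    rw [← hPc]
    apply hcon
    rw [Submodule.mem_colon]
    intro m _
    exact Submodule.smul_mem_smul (Ideal.subset_span rfl) trivial
  obtain ⟨i, hi⟩ := Set.mem_iUnion.mp (hcov hmem)
  apply hi
  intro r hr
  rw [Submodule.mem_colon] at hr ⊢
  intro m hm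
  have hki : k i ∈ P.colon ⊤ := by
    rw [hPc]; exact hle (Ideal.subset_span ⟨i, rfl⟩)
  have : Ideal.span {k i} • (⊤ : Submodule R M) ≤ P := by
    rw [Submodule.smul_le]
    intro s hs x hx
    rcases Ideal.mem_span_singleton.mp hs with ⟨c, rfl⟩
    rw [mul_comm, mul_smul]
    exact Submodule.smul_mem _ c ((Submodule.mem_colon.mp hki) _ trivial)
  exact this (hr m hm)
end
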